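/- arXiv:1103.0218 — 2 statements merged into one kernel-verified Lean document; each statement's English description precedes it below -/
import Mathlib

section
/- Let f_n ∈ ℤ[x_1, …, x_n] be the Newton polynomials, defined recursively by f_1 = x_1 and, for n > 1, f_n = Σ_{k=1}^{n-1} (−1)^{k−1} x_k · f_{n−k} + (−1)^{n−1} n · x_n. Then for every n ≥ 1, every commutative ring R, and all elements e, b_1, …, b_n ∈ R, one has f_n(e² + b_1, e² b_1 + b_2, …, e² b_{n-1} + b_n) = e^{2n} + f_n(b_1, …, b_n) in R. -/
open MvPolynomial

/-- The Newton polynomials, defined recursively by `f_1 = x_1` and, for `n > 1`,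
`f_n = Σ_{k=1}^{n-1} (−1)^{k−1} x_k f_{n−k} + (−1)^{n−1} n x_n`.
Here the variable `X i : MvPolynomial ℕ ℤ` represents `x_{i+1}`, so `newton n`
lies in `ℤ[x_1, …, x_n]` viewed inside `ℤ[x_1, x_2, …]`. -/
noncomputable def newton : ℕ → MvPolynomial ℕ ℤ
  | 0 => 0
  | 1 => X 0
  | (n + 2) =>
      (∑ k ∈ Finset.range (n + 1),
        (-1 : MvPolynomial ℕ ℤ) ^ k * X k * newton (n + 1 - k))
      + (-1 : MvPolynomial ℕ ℤ) ^ (n + 1) * ((n + 2 : ℕ) : MvPolynomial ℕ ℤ) * X (n + 1)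
  decreasing_by omega

section Aux

variable {R : Type*} [CommRing R]

/-- The Newton recurrence, pushed through evaluation. -/
lemma newton_rec_eval (b : ℕ → R) (m : ℕ) :
    aeval b (newton (m+2)) =
      (∑ k ∈ Finset.range (m+1), (-1:R)^k * b k * aeval b (newton (m+1-k)))
      + (-1:R)^(m+1) * ((m+2 : ℕ) : R) * b (m+1) := by
  rw [newton]
  simp [map_sum]

/-- Splitting off the `k = 0` term of an alternating sum weighted by
`d k = if k = 0 then 1 else b (k-1)`. -/
lemma telescope (b : ℕ → R) (n : ℕ) (g : ℕ → R) :
    ∑ k ∈ Finset.range (n+1), (-1:R)^k * (if k = 0 then 1 else b (k-1)) * g k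
      = g 0 - ∑ j ∈ Finset.range n, (-1:R)^j * b j * g (j+1) := by
  rw [Finset.sum_range_succ']
  have h : ∀ i ∈ Finset.range n,
      (-1:R)^(i+1) * (if i+1 = 0 then 1 else b (i+1-1)) * g (i+1)
        = -((-1:R)^i * b i * g (i+1)) := by
    intro i _
    simp [pow_succ]
  rw [Finset.sum_congr rfl h, Finset.sum_neg_distrib]
  simp
  ring

/-- The key cancellation coming from the Newton recurrence. -/
lemma bracket (b : ℕ → R) (n : ℕ) :
    ∑ k ∈ Finset.range (n+1), (-1:R)^k * (if k = 0 then 1 else b (k-1))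
        * aeval b (newton (n+1-k))
      = (-1:R)^n * ((n+1 : ℕ) : R) * b n := by
  rw [telescope]
  cases n with
  | zero => simp [newton]
  | succ m =>
    simp only [Nat.sub_zero]
    rw [newton_rec_eval b m]
    have h : ∀ j ∈ Finset.range (m+1),
        (-1:R)^j * b j * aeval b (newton (m+2-(j+1)))
          = (-1:R)^j * b j * aeval b (newton (m+1-j)) := by
      intro j _
      rw [show m+2-(j+1) = m+1-j by omega]
    rw [Finset.sum_congr rfl h]
    push_cast
    ring

end Aux

/-- For every `n ≥ 1`, every commutative ring `R`, and all elements
`e, b_1, …, b_n ∈ R` (here `b i` represents `b_{i+1}`), one has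
`f_n(e² + b_1, e² b_1 + b_2, …, e² b_{n-1} + b_n) = e^{2n} + f_n(b_1, …, b_n)`,
where the `i`-th argument is `e² b_{i-1} + b_i` with the convention `b_0 = 1`. -/
theorem newton_euler_pontryagin (n : ℕ) (hn : 1 ≤ n)
    (R : Type*) [CommRing R] (e : R) (b : ℕ → R) :
    aeval (fun i : ℕ => e ^ 2 * (if i = 0 then 1 else b (i - 1)) + b i) (newton n)
      = e ^ (2 * n) + aeval b (newton n) := by
  induction n using Nat.strong_induction_on with
  | _ n ih =>
    match n, hn with
    | 1, _ => simp [newton]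
    | (n+2), _ =>
      have key := ih
      set a : ℕ → R := fun i => e ^ 2 * (if i = 0 then 1 else b (i - 1)) + b i with ha
      rw [newton_rec_eval a n, newton_rec_eval b n]
      -- rewrite each `aeval a (newton (n+1-k))` using the strong induction hypothesis,
      -- and split each summand into four pieces
      have hsplit : ∀ k ∈ Finset.range (n+1),
          (-1:R)^k * a k * aeval a (newton (n+1-k))
            = ((-1:R)^k * (if k = 0 then 1 else b (k-1)) * (e^2 * e^(2*(n+1-k)))
              + e^2 * ((-1:R)^k * (if k = 0 then 1 else b (k-1)) * aeval b (newton (n+1-k)))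
              + (-1:R)^k * b k * e^(2*(n+1-k)))
              + (-1:R)^k * b k * aeval b (newton (n+1-k)) := by
        intro k hk
        simp only [Finset.mem_range] at hk
        rw [key (n+1-k) (by omega) (by omega)]
        simp only [ha]
        ring
      rw [Finset.sum_congr rfl hsplit, Finset.sum_add_distrib, Finset.sum_add_distrib,
        Finset.sum_add_distrib, ← Finset.mul_sum, bracket,
        telescope b n (fun k => e^2 * e^(2*(n+1-k))), Finset.sum_range_succ]
      have h1 : ∀ j ∈ Finset.range n,
          (-1:R)^j * b j * (e^2 * e^(2*(n+1-(j+1)))) = (-1:R)^j * b j * e^(2*(n+1-j)) := by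
        intro j hj
        simp only [Finset.mem_range] at hj
        rw [show 2*(n+1-j) = 2 + 2*(n+1-(j+1)) by omega, pow_add]
      rw [Finset.sum_congr rfl h1, show n+1-n = 1 by omega]
      simp only [ha, Nat.add_eq_zero, Nat.succ_ne_zero, and_false, if_false,
        Nat.add_sub_cancel]
      push_cast
      ring
end

section
/- Let n ≥ 1 and let h ∈ ℤ[x_1, …, x_n] be homogeneous of degree n with respect to the grading in which the variable x_i has degree i. If h satisfies h(1 + x_1, x_1 + x_2, …, x_{n-1} + x_n) = h(x_1, …, x_n), then h = 0. -/
/-!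
Substituting `x_i ↦ e_i(y_1, …, y_m)` (elementary symmetric polynomials) turns the shift into
the specialization `y_0 ↦ 1`, since `e_i(1, y_1, …, y_m) = e_i(y_1, …, y_m) + e_{i-1}(y_1, …, y_m)`.
So if `h` is shift invariant, `h(e(y_0, …, y_m))` is homogeneous of degree `n` and its
dehomogenization is `h(e(y_1, …, y_m))`; a homogeneous polynomial with vanishing dehomogenization
vanishes. Starting from `h(e()) = h(0, …, 0) = 0` (as `n ≥ 1`), induction on `m` gives
`h(e_1, …, e_n) = 0` in `n` variables, so `h = 0` by the fundamental theorem of symmetric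
polynomials.
-/

open MvPolynomial

/-- The shift substitution on `ℤ[x_1, …, x_n]` (variable `i : Fin n` represents `x_{i+1}`),
sending `x_i ↦ x_{i-1} + x_i` with the convention `x_0 = 1`. -/
noncomputable def shiftSub (n : ℕ) :
    MvPolynomial (Fin n) ℤ →ₐ[ℤ] MvPolynomial (Fin n) ℤ :=
  aeval (fun i : Fin n =>
    (if (i : ℕ) = 0 then 1
     else X (⟨(i : ℕ) - 1, Nat.lt_of_le_of_lt (Nat.sub_le _ _) i.2⟩ : Fin n)) + X i)

theorem Finsupp.degree_cons {M : Type*} [AddCommMonoid M] {m : ℕ} (y : M) (s : Fin m →₀ M) :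
    (s.cons y).degree = y + s.degree :=
  Finsupp.sum_cons m s y

theorem Multiset.esymm_cons_succ {R : Type*} [CommSemiring R] (a : R) (s : Multiset R) (k : ℕ) :
    (a ::ₘ s).esymm (k + 1) = s.esymm (k + 1) + a * s.esymm k := by
  simp only [Multiset.esymm, Multiset.powersetCard_cons, Multiset.map_add, Multiset.sum_add,
    Multiset.map_map, Function.comp_def, Multiset.prod_cons, Multiset.sum_map_mul_left]

namespace MvPolynomial

variable {σ τ R S : Type*} [CommSemiring R]

variable (σ R) in
theorem isHomogeneous_esymm [Fintype σ] (k : ℕ) : (esymm σ R k).IsHomogeneous k := by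
  refine IsHomogeneous.sum _ _ _ fun t ht => ?_
  have := IsHomogeneous.prod t (fun i => (X i : MvPolynomial σ R)) (fun _ => 1)
    fun i _ => isHomogeneous_X R i
  rwa [Finset.sum_const, smul_eq_mul, mul_one, (Finset.mem_powersetCard.mp ht).2] at this

theorem IsWeightedHomogeneous.isHomogeneous_aeval [CommSemiring S] [Algebra R S]
    {φ : MvPolynomial σ R} {w : σ → ℕ} {m : ℕ} (hφ : φ.IsWeightedHomogeneous w m)
    (g : σ → MvPolynomial τ S) (hg : ∀ i, (g i).IsHomogeneous (w i)) :
    (aeval g φ).IsHomogeneous m := by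
  refine IsHomogeneous.sum _ _ _ fun d hd => ?_
  rw [← zero_add m]
  refine (isHomogeneous_C _ _).mul ?_
  have hm : m = ∑ i ∈ d.support, w i * d i := by
    rw [← hφ (mem_support_iff.mp hd), Finsupp.weight_apply, Finsupp.sum]
    simp_rw [smul_eq_mul, mul_comm]
  rw [hm]
  exact IsHomogeneous.prod _ _ _ fun i _ => (hg i).pow (d i)

variable (R) in
noncomputable def dehomogenize (m : ℕ) :
    MvPolynomial (Fin (m + 1)) R →ₐ[R] MvPolynomial (Fin m) R :=
  aeval (Fin.cons 1 X)

theorem dehomogenize_esymm_succ (m k : ℕ) :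
    dehomogenize R m (esymm (Fin (m + 1)) R (k + 1)) =
      esymm (Fin m) R (k + 1) + esymm (Fin m) R k := by
  rw [dehomogenize, aeval_esymm_eq_multiset_esymm, Fin.univ_val_map, List.ofFn_succ,
    ← Multiset.cons_coe, Multiset.esymm_cons_succ, Fin.cons_zero, one_mul,
    esymm_eq_multiset_esymm, Fin.univ_val_map]
  simp only [Fin.cons_succ]

theorem dehomogenize_eq_eval_finSuccEquiv {m : ℕ} (Q : MvPolynomial (Fin (m + 1)) R) :
    dehomogenize R m Q = Polynomial.eval 1 (finSuccEquiv R m Q) := by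
  induction Q using MvPolynomial.induction_on with
  | C r => simp [dehomogenize, finSuccEquiv_apply]
  | add p q hp hq => rw [map_add, map_add, Polynomial.eval_add, hp, hq]
  | mul_X p i hp =>
    rw [map_mul, map_mul, Polynomial.eval_mul, hp]
    cases i using Fin.cases <;> simp [dehomogenize, finSuccEquiv_X_zero, finSuccEquiv_X_succ]

theorem coeff_dehomogenize {m : ℕ} (Q : MvPolynomial (Fin (m + 1)) R) (e : Fin m →₀ ℕ) :
    coeff e (dehomogenize R m Q) = ∑ k ∈ (finSuccEquiv R m Q).support, coeff (e.cons k) Q := by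
  rw [dehomogenize_eq_eval_finSuccEquiv, Polynomial.eval_eq_sum, Polynomial.sum_def, coeff_sum]
  simp [finSuccEquiv_coeff_coeff]

theorem IsHomogeneous.coeff_dehomogenize_tail {m N : ℕ} {Q : MvPolynomial (Fin (m + 1)) R}
    (hQ : Q.IsHomogeneous N) {d : Fin (m + 1) →₀ ℕ} (hd : d.degree = N) :
    coeff d.tail (dehomogenize R m Q) = coeff d Q := by
  rw [coeff_dehomogenize, Finset.sum_eq_single (d 0), Finsupp.cons_tail]
  · intro k _ hk
    refine hQ.coeff_eq_zero fun hk' => hk ?_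
    rwa [Finsupp.degree_cons, ← hd, ← Finsupp.cons_tail d, Finsupp.degree_cons,
      Finsupp.tail_cons, add_left_inj] at hk'
  · intro hk
    rw [← finSuccEquiv_coeff_coeff, Polynomial.notMem_support_iff.mp hk, coeff_zero]

theorem IsHomogeneous.eq_zero_of_dehomogenize_eq_zero {m N : ℕ}
    {Q : MvPolynomial (Fin (m + 1)) R} (hQ : Q.IsHomogeneous N) (h : dehomogenize R m Q = 0) :
    Q = 0 := by
  ext d
  by_contra hne
  have hd : d.degree = N := by rw [Finsupp.degree_eq_weight_one]; exact hQ hne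
  rw [← hQ.coeff_dehomogenize_tail hd, h, coeff_zero] at hne
  exact hne rfl

end MvPolynomial

theorem dehomogenize_esymmAlgHom (n m : ℕ) (p : MvPolynomial (Fin n) ℤ) :
    dehomogenize ℤ m (esymmAlgHom (Fin (m + 1)) ℤ n p) =
      esymmAlgHom (Fin m) ℤ n (shiftSub n p) := by
  have : (dehomogenize ℤ m).comp (aeval fun i : Fin n => esymm (Fin (m + 1)) ℤ (i + 1)) =
      (aeval fun i : Fin n => esymm (Fin m) ℤ (i + 1)).comp (shiftSub n) := by
    refine algHom_ext fun i => ?_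
    simp only [AlgHom.comp_apply, aeval_X, shiftSub, map_add, dehomogenize_esymm_succ]
    obtain ⟨_ | i, hi⟩ := i
    · simp [esymm_zero, add_comm]
    · simp [add_comm]
  simpa only [esymmAlgHom_apply, AlgHom.comp_apply] using AlgHom.congr_fun this p

theorem esymmAlgHom_eq_zero_of_shiftSub_eq_self {n : ℕ} (hn : n ≠ 0)
    {h : MvPolynomial (Fin n) ℤ}
    (hhom : h.IsWeightedHomogeneous (fun i : Fin n => (i : ℕ) + 1) n)
    (hinv : shiftSub n h = h) (m : ℕ) :
    (esymmAlgHom (Fin m) ℤ n h : MvPolynomial (Fin m) ℤ) = 0 := by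
  induction m with
  | zero =>
    have hconst : constantCoeff h = 0 := hhom.coeff_eq_zero 0 (by simpa using hn.symm)
    have hesymm (k : ℕ) : esymm (Fin 0) ℤ (k + 1) = 0 := by
      rw [esymm, Finset.powersetCard_eq_empty.mpr (by simp), Finset.sum_empty]
    rw [esymmAlgHom_apply]
    simp only [hesymm, aeval_zero', hconst, map_zero]
  | succ m ih =>
    have hhom' := hhom.isHomogeneous_aeval _ fun i => isHomogeneous_esymm (Fin (m + 1)) ℤ _
    rw [← esymmAlgHom_apply] at hhom'
    refine hhom'.eq_zero_of_dehomogenize_eq_zero ?_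
    rw [dehomogenize_esymmAlgHom, hinv, ih]

/-- If `h ∈ ℤ[x_1, …, x_n]` is homogeneous of degree `n` for the grading in which
`x_i` has degree `i`, and `h(1 + x_1, x_1 + x_2, …, x_{n-1} + x_n) = h`, then `h = 0`. -/
theorem shift_invariant_homogeneous_eq_zero (n : ℕ) (hn : 1 ≤ n)
    (h : MvPolynomial (Fin n) ℤ)
    (hhom : h.IsWeightedHomogeneous (fun i : Fin n => (i : ℕ) + 1) n)
    (hinv : shiftSub n h = h) :
    h = 0 := by
  apply esymmAlgHom_fin_injective ℤ le_rfl
  rw [map_zero, ← Subalgebra.coe_eq_zero]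
  exact esymmAlgHom_eq_zero_of_shiftSub_eq_self (Nat.pos_iff_ne_zero.mp hn) hhom hinv n
end
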